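/- Let a₁,…,aₙ ∈ ℝ^d, λ > 0, T > 0, and let F be a probability measure on ℝ. Then log ∫_{|t|≤T} exp(−(1/2) Σ_{k=1}^n ∫_ℝ (1 − cos(⟨t,a_k⟩ z)) λ F(dz)) dt ≤ ∫_ℝ ( log ∫_{|t|≤T} exp(−(λ/2) Σ_{k=1}^n (1 − cos(⟨t,a_k⟩ z))) dt ) F(dz). -/

import Mathlib

open MeasureTheory Metric

/-- Concentration function `Q(F, τ) = sup_x F(x + τB)` with `B` the closed ball of radius 1/2. -/
noncomputable def concFn {d : ℕ} (μ : Measure (EuclideanSpace ℝ (Fin d))) (τ : ℝ) : ℝ :=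
  ⨆ x : EuclideanSpace ℝ (Fin d), (μ (closedBall x (τ / 2))).toReal

/-- Characteristic function of a measure on `ℝ^d`. -/
noncomputable def charF {d : ℕ} (μ : Measure (EuclideanSpace ℝ (Fin d)))
    (t : EuclideanSpace ℝ (Fin d)) : ℂ :=
  ∫ x, Complex.exp (Complex.I * ((inner ℝ t x : ℝ) : ℂ)) ∂μ

/-- Sup-norm `|t| = max_j |t_j|`. -/
noncomputable def supNorm {d : ℕ} (t : EuclideanSpace ℝ (Fin d)) : ℝ :=
  ‖(WithLp.equiv 2 (Fin d → ℝ)) t‖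

/-- `⌊x⌋` = the largest integer `k` with `k < x`. -/
noncomputable def lflr (x : ℝ) : ℤ := ⌈x⌉ - 1

/-!
The functional `f ↦ log ∫ exp f dμ` is convex, and the inequality is Jensen's inequality for it.
Concretely, put `I t = ∫ g t z dF(z)` and let `ν` be `μ` tilted by `I`, i.e.
`dν = exp I dμ / ∫ exp I dμ`. For each `z`, Jensen's inequality for `exp` under `ν` gives
`log ∫ exp (g · z) dμ ≥ log ∫ exp I dμ + ∫ (g · z - I) dν`, and after integrating in `z`
the last term vanishes by Fubini.
-/

open Real Function

section LogIntegralExp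

variable {α β : Type*} [MeasurableSpace α] [MeasurableSpace β]

theorem integrable_exp_of_le {μ : Measure α} [IsFiniteMeasure μ] {f : α → ℝ}
    (hf : AEStronglyMeasurable f μ) {C : ℝ} (hC : ∀ x, f x ≤ C) :
    Integrable (fun x ↦ exp (f x)) μ :=
  .of_bound (continuous_exp.comp_aestronglyMeasurable hf) (exp C) <| .of_forall fun x ↦ by
    simpa using hC x

theorem integral_le_log_integral_exp {ν : Measure α} [IsProbabilityMeasure ν] {f : α → ℝ}
    (hf : Integrable f ν) (hexp : Integrable (fun x ↦ exp (f x)) ν) :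
    ∫ x, f x ∂ν ≤ log (∫ x, exp (f x) ∂ν) := by
  have jensen : exp (∫ x, f x ∂ν) ≤ ∫ x, exp (f x) ∂ν :=
    convexOn_exp.map_integral_le continuous_exp.continuousOn isClosed_univ
      (by simp) hf hexp
  simpa using log_le_log (exp_pos _) jensen

theorem abs_log_integral_exp_le {ν : Measure α} [IsProbabilityMeasure ν] {f : α → ℝ}
    (hf : AEStronglyMeasurable f ν) {C : ℝ} (hC : ∀ x, |f x| ≤ C) :
    |log (∫ x, exp (f x) ∂ν)| ≤ C := by
  have hexp := integrable_exp_of_le hf fun x ↦ le_of_abs_le (hC x)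
  have lower : exp (-C) ≤ ∫ x, exp (f x) ∂ν := by
    simpa using integral_mono (integrable_const _) hexp
      fun x ↦ exp_le_exp.mpr (neg_le_of_abs_le (hC x))
  have upper : ∫ x, exp (f x) ∂ν ≤ exp C := by
    simpa using integral_mono hexp (integrable_const _)
      fun x ↦ exp_le_exp.mpr (le_of_abs_le (hC x))
  rw [abs_le]
  constructor
  · simpa using log_le_log (exp_pos _) lower
  · simpa using log_le_log (by linarith [exp_pos (-C)]) upper

theorem integrable_log_integral_exp (ν : Measure α) [IsProbabilityMeasure ν]
    (F : Measure β) [IsFiniteMeasure F] {h : α → β → ℝ} (hh : Measurable (uncurry h))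
    {C : ℝ} (hC : ∀ t z, |h t z| ≤ C) :
    Integrable (fun z ↦ log (∫ t, exp (h t z) ∂ν)) F := by
  have hmeas : StronglyMeasurable (fun z ↦ ∫ t, exp (h t z) ∂ν) :=
    (continuous_exp.measurable.comp hh).stronglyMeasurable.integral_prod_left'
  refine .of_bound (measurable_log.comp hmeas.measurable).aestronglyMeasurable C
    (.of_forall fun z ↦ ?_)
  exact abs_log_integral_exp_le hh.of_uncurry_right.aestronglyMeasurable (hC · z)

theorem integral_integral_le_integral_log_integral_exp (ν : Measure α) [IsProbabilityMeasure ν]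
    (F : Measure β) [IsFiniteMeasure F] {h : α → β → ℝ} (hh : Measurable (uncurry h))
    {C : ℝ} (hC : ∀ t z, |h t z| ≤ C) :
    ∫ t, ∫ z, h t z ∂F ∂ν ≤ ∫ z, log (∫ t, exp (h t z) ∂ν) ∂F := by
  have hprod : Integrable (uncurry h) (ν.prod F) :=
    .of_bound hh.aestronglyMeasurable C (.of_forall fun p ↦ hC p.1 p.2)
  rw [integral_integral_swap hprod]
  refine integral_mono hprod.integral_prod_right (integrable_log_integral_exp ν F hh hC)
    fun z ↦ integral_le_log_integral_exp ?_ ?_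
  · exact .of_bound hh.of_uncurry_right.aestronglyMeasurable C (.of_forall (hC · z))
  · exact integrable_exp_of_le hh.of_uncurry_right.aestronglyMeasurable
      fun t ↦ le_of_abs_le (hC t z)

theorem log_integral_exp_integral_le (μ : Measure α) [IsFiniteMeasure μ]
    (F : Measure β) [IsProbabilityMeasure F] {g : α → β → ℝ} (hg : Measurable (uncurry g))
    {C : ℝ} (hC : ∀ t z, |g t z| ≤ C) :
    log (∫ t, exp (∫ z, g t z ∂F) ∂μ) ≤ ∫ z, log (∫ t, exp (g t z) ∂μ) ∂F := by
  rcases eq_zero_or_neZero μ with rfl | hμ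
  · simp
  set I : α → ℝ := fun t ↦ ∫ z, g t z ∂F
  have hI : Measurable I := hg.stronglyMeasurable.integral_prod_right.measurable
  have hIC : ∀ t, |I t| ≤ C := fun t ↦ by
    simpa using norm_integral_le_of_norm_le_const (μ := F) (f := g t) (.of_forall (hC t))
  have hexpI : Integrable (fun t ↦ exp (I t)) μ :=
    integrable_exp_of_le hI.aestronglyMeasurable fun t ↦ le_of_abs_le (hIC t)
  set Z := ∫ t, exp (I t) ∂μ
  have := isProbabilityMeasure_tilted hexpI
  set h : α → β → ℝ := fun t z ↦ g t z - I t
  have hh : Measurable (uncurry h) := hg.sub (hI.comp measurable_fst)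
  have hhC : ∀ t z, |h t z| ≤ 2 * C := fun t z ↦
    (abs_sub _ _).trans (by linarith [hC t z, hIC t])
  have centered : ∀ t, ∫ z, h t z ∂F = 0 := fun t ↦ by
    rw [integral_sub (.of_bound hg.of_uncurry_left.aestronglyMeasurable C (.of_forall (hC t)))
      (integrable_const _)]
    simp [I]
  have tilt : ∀ z, ∫ t, exp (g t z) ∂μ = Z * ∫ t, exp (h t z) ∂(μ.tilted I) := fun z ↦ by
    rw [integral_exp_tilted, mul_div_cancel₀ _ (integral_exp_pos hexpI).ne']
    simp [h]
  have tilt_pos : ∀ z, 0 < ∫ t, exp (h t z) ∂(μ.tilted I) := fun z ↦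
    integral_exp_pos <| integrable_exp_of_le hh.of_uncurry_right.aestronglyMeasurable
      fun t ↦ le_of_abs_le (hhC t z)
  calc log Z = log Z + ∫ t, ∫ z, h t z ∂F ∂(μ.tilted I) := by simp [centered]
    _ ≤ log Z + ∫ z, log (∫ t, exp (h t z) ∂(μ.tilted I)) ∂F := by
      gcongr
      exact integral_integral_le_integral_log_integral_exp _ F hh hhC
    _ = ∫ z, (log Z + log (∫ t, exp (h t z) ∂(μ.tilted I))) ∂F := by
      rw [integral_add (integrable_const _) (integrable_log_integral_exp _ F hh hhC),
        integral_const, probReal_univ, one_smul]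
    _ = ∫ z, log (∫ t, exp (g t z) ∂μ) ∂F := by
      congr 1 with z
      rw [tilt, log_mul (integral_exp_pos hexpI).ne' (tilt_pos z).ne']

end LogIntegralExp

theorem isBounded_setOf_supNorm_le {d : ℕ} (T : ℝ) :
    Bornology.IsBounded {t : EuclideanSpace ℝ (Fin d) | supNorm t ≤ T} :=
  ((PiLp.antilipschitzWith_ofLp 2 fun _ : Fin d ↦ ℝ).isBounded_preimage
    (isBounded_closedBall (x := 0) (r := T))).subset fun t ht ↦ by simpa [supNorm] using ht

theorem abs_one_sub_cos_le (x : ℝ) : |1 - cos x| ≤ 2 := by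
  rw [abs_le]
  constructor <;> linarith [neg_one_le_cos x, cos_le_one x]

theorem abs_sum_one_sub_cos_le {ι : Type*} (s : Finset ι) (x : ι → ℝ) :
    |∑ i ∈ s, (1 - cos (x i))| ≤ 2 * s.card :=
  (Finset.abs_sum_le_sum_abs _ _).trans <| by
    simpa [mul_comm] using Finset.sum_le_card_nsmul s _ 2 fun i _ ↦ abs_one_sub_cos_le (x i)

theorem stmt7_general (d n : ℕ) (a : Fin n → EuclideanSpace ℝ (Fin d)) (lam T : ℝ)
    (F : Measure ℝ) [IsProbabilityMeasure F] :
    Real.log (∫ t in {t : EuclideanSpace ℝ (Fin d) | supNorm t ≤ T},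
        Real.exp (-(1/2) * ∑ k, ∫ z, (1 - Real.cos ((inner ℝ t (a k) : ℝ) * z)) * lam ∂F))
      ≤ ∫ z, Real.log (∫ t in {t : EuclideanSpace ℝ (Fin d) | supNorm t ≤ T},
          Real.exp (-(lam/2) * ∑ k, (1 - Real.cos ((inner ℝ t (a k) : ℝ) * z)))) ∂F := by
  have : IsFiniteMeasure (volume.restrict {t : EuclideanSpace ℝ (Fin d) | supNorm t ≤ T}) :=
    isFiniteMeasure_restrict.mpr (isBounded_setOf_supNorm_le T).measure_lt_top.ne
  have hexponent : ∀ t : EuclideanSpace ℝ (Fin d),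
      -(1/2) * ∑ k, ∫ z, (1 - cos ((inner ℝ t (a k) : ℝ) * z)) * lam ∂F
        = ∫ z, -(lam/2) * ∑ k, (1 - cos ((inner ℝ t (a k) : ℝ) * z)) ∂F := fun t ↦ by
    have hint : ∀ k, Integrable (fun z ↦ 1 - cos ((inner ℝ t (a k) : ℝ) * z)) F := fun k ↦
      .of_bound (by fun_prop) 2 (.of_forall fun z ↦ abs_one_sub_cos_le _)
    simp only [integral_mul_const, integral_const_mul, integral_finsetSum _ fun k _ ↦ hint k,
      ← Finset.sum_mul]
    ring
  simp_rw [hexponent]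
  exact log_integral_exp_integral_le _ F (Continuous.measurable (by fun_prop))
    (C := |lam / 2| * (2 * n)) fun t z ↦ by
      rw [abs_mul, abs_neg]
      gcongr
      simpa using abs_sum_one_sub_cos_le (Finset.univ : Finset (Fin n)) _

/-- the Jensen/Hölder-type inequality (formula (15) of the paper). -/
theorem stmt7 (d n : ℕ) (a : Fin n → EuclideanSpace ℝ (Fin d)) (lam T : ℝ)
    (hlam : 0 < lam) (hT : 0 < T) (F : Measure ℝ) [IsProbabilityMeasure F] :
    Real.log (∫ t in {t : EuclideanSpace ℝ (Fin d) | supNorm t ≤ T},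
        Real.exp (-(1/2) * ∑ k, ∫ z, (1 - Real.cos ((inner ℝ t (a k) : ℝ) * z)) * lam ∂F))
      ≤ ∫ z, Real.log (∫ t in {t : EuclideanSpace ℝ (Fin d) | supNorm t ≤ T},
          Real.exp (-(lam/2) * ∑ k, (1 - Real.cos ((inner ℝ t (a k) : ℝ) * z)))) ∂F :=
  stmt7_general d n a lam T F
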